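/- For every natural number a ≠ 1, β(l̃_a − 1) = ⌈(a − 1)/2⌉. -/

import Mathlib

/-- The Lucas sequence: l 0 = 2, l 1 = 1, l (n+2) = l (n+1) + l n. -/
def lucas : ℕ → ℕ
  | 0 => 2
  | 1 => 1
  | n + 2 => lucas (n + 1) + lucas n

/-- The modified (monotone) Lucas sequence: l̃ 0 = 1, l̃ 1 = 2, l̃ n = l n for n ≥ 2. -/
def ltil : ℕ → ℕ
  | 0 => 1
  | 1 => 2
  | n + 2 => lucas (n + 2)

/-- β x : minimal number of summands in a representation of x as a sum of
modified Lucas numbers (with repetitions allowed). -/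
noncomputable def beta (x : ℕ) : ℕ :=
  sInf {s : ℕ | ∃ k : ℕ, ∃ b : ℕ → ℕ,
    x = ∑ i ∈ Finset.range (k + 1), b i * ltil i ∧ s = ∑ i ∈ Finset.range (k + 1), b i}

/-- γ x : the greatest k with l̃ k ≤ x (for x ≥ 1). -/
noncomputable def gamma (x : ℕ) : ℕ := sSup {k : ℕ | ltil k ≤ x}

/-- S a : the additive submonoid of ℕ generated by {l_a} ∪ {l_a + l_n : n ∈ ℕ}. -/
def Sset (a : ℕ) : AddSubmonoid ℕ :=
  AddSubmonoid.closure ({lucas a} ∪ {x : ℕ | ∃ n : ℕ, x = lucas a + lucas n})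

/-- T a : the additive submonoid of ℕ generated by {l_a + l_n : n ∈ ℕ}. -/
def Tset (a : ℕ) : AddSubmonoid ℕ :=
  AddSubmonoid.closure {x : ℕ | ∃ n : ℕ, x = lucas a + lucas n}

/-!
Greedy representations are optimal: a representation of `x ≥ l̃ j` by parts of index at most `j`
can be rewritten, without increasing the number of parts, so that `l̃ j` is one of its parts.
By induction on `j`, one first makes `l̃ (j - 1)` a part (if `l̃ j` is not one already) and then
a second part `l̃ i` with `l̃ (j - 1) + l̃ i ≥ l̃ j`; such a pair is always `l̃ j` plus at most one
further part, e.g. `l̃ (j - 1) + l̃ (j - 2) = l̃ j` and `2 l̃ (j - 1) = l̃ j + l̃ (j - 3)` for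
large `j`. As `l̃ (a + 2) - 1 = l̃ (a + 1) + (l̃ a - 1)` for `a ≠ 1`, the greedy representation
gives `β (l̃ (a + 2) - 1) = β (l̃ a - 1) + 1`, starting from `β 0 = 0` and `β 2 = β 3 = 1`.
-/

open Multiset

lemma lucas_pos : ∀ n, 0 < lucas n
  | 0 | 1 => by decide
  | n + 2 => Nat.add_pos_right _ (lucas_pos n)

lemma ltil_pos (n : ℕ) : 0 < ltil n := by
  match n with
  | 0 | 1 => decide
  | n + 2 => exact lucas_pos (n + 2)

lemma ltil_add_two {n : ℕ} (hn : n ≠ 1) : ltil (n + 2) = ltil (n + 1) + ltil n := by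
  match n, hn with
  | 0, _ => rfl
  | n + 2, _ => rfl

lemma ltil_strictMono : StrictMono ltil := by
  refine strictMono_nat_of_lt_succ fun n => ?_
  match n with
  | 0 | 1 | 2 => decide
  | n + 3 =>
    rw [ltil_add_two (n := n + 2) (by omega)]
    exact Nat.lt_add_of_pos_right (ltil_pos _)

lemma exists_ltil_succ_eq_add (j : ℕ) : ∃ p ≤ j, ltil (j + 1) = ltil j + ltil p := by
  match j with
  | 0 | 1 | 2 => exact ⟨0, by omega, rfl⟩
  | j + 3 => exact ⟨j + 2, by omega, ltil_add_two (by omega)⟩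

/-- A multiset `M` of indices encodes the representation `∑ i ∈ M, l̃ i` of `lsum M`, with
`card M` parts. -/
def lsum (M : Multiset ℕ) : ℕ := (M.map ltil).sum

@[simp] lemma lsum_zero : lsum 0 = 0 := rfl

@[simp] lemma lsum_cons (i : ℕ) (M : Multiset ℕ) : lsum (i ::ₘ M) = ltil i + lsum M := by
  simp [lsum]

@[simp] lemma lsum_singleton (i : ℕ) : lsum {i} = ltil i := by
  simp [lsum]

@[simp] lemma lsum_add (M N : Multiset ℕ) : lsum (M + N) = lsum M + lsum N := by
  simp [lsum]

lemma ltil_le_lsum {i : ℕ} {M : Multiset ℕ} (h : i ∈ M) : ltil i ≤ lsum M :=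
  le_sum_of_mem (mem_map_of_mem ltil h)

lemma le_of_mem_of_lsum_lt {i j : ℕ} {M : Multiset ℕ} (hi : i ∈ M) (hM : lsum M < ltil (j + 1)) :
    i ≤ j :=
  Nat.le_of_lt_succ (ltil_strictMono.lt_iff_lt.mp ((ltil_le_lsum hi).trans_lt hM))

lemma exists_ltil_add_ltil_eq {i j : ℕ} (hij : i ≤ j) (h : ltil (j + 1) ≤ ltil j + ltil i) :
    ∃ N : Multiset ℕ, card N ≤ 1 ∧ (∀ k ∈ N, k ≤ j) ∧ ltil j + ltil i = ltil (j + 1) + lsum N := by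
  match j with
  | 0 | 1 | 2 =>
    interval_cases i
    all_goals first
      | exact ⟨0, by simp, by simp, rfl⟩
      | exact ⟨{0}, by simp, by simp, rfl⟩
      | exact ⟨{1}, by simp, by simp, rfl⟩
  | j + 3 =>
    rw [ltil_add_two (n := j + 2) (by omega)] at h ⊢
    obtain rfl | rfl : i = j + 2 ∨ i = j + 3 := by
      have := ltil_strictMono.le_iff_le.mp (Nat.le_of_add_le_add_left h)
      omega
    · exact ⟨0, by simp, by simp, by simp⟩
    · obtain ⟨q, hq, hsucc⟩ := exists_ltil_succ_eq_add (j + 2)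
      exact ⟨{q}, by simp, by simp; omega, by simp [hsucc]; ring⟩

lemma exists_succ_mem_of_cons_cons {i j : ℕ} {R : Multiset ℕ} (hij : i ≤ j)
    (h : ltil (j + 1) ≤ ltil j + ltil i) (hR : ∀ k ∈ R, k ≤ j) :
    ∃ M', lsum M' = lsum (j ::ₘ i ::ₘ R) ∧ card M' ≤ card (j ::ₘ i ::ₘ R) ∧
      (∀ k ∈ M', k ≤ j + 1) ∧ j + 1 ∈ M' := by
  obtain ⟨N, hN, hNj, hsum⟩ := exists_ltil_add_ltil_eq hij h
  refine ⟨(j + 1) ::ₘ (N + R), ?_, ?_, ?_, mem_cons_self _ _⟩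
  · simp only [lsum_cons, lsum_add]
    omega
  · simp only [card_cons, card_add]
    omega
  · simp only [mem_cons, mem_add]
    rintro k (rfl | hk | hk)
    exacts [le_rfl, (hNj k hk).trans j.le_succ, (hR k hk).trans j.le_succ]

lemma exists_mem_of_ltil_le_lsum (j : ℕ) : ∀ M : Multiset ℕ, (∀ i ∈ M, i ≤ j) →
    ltil j ≤ lsum M →
    ∃ M', lsum M' = lsum M ∧ card M' ≤ card M ∧ (∀ i ∈ M', i ≤ j) ∧ j ∈ M' := by
  induction j using Nat.strong_induction_on with
  | _ j ih =>
  intro M hMj hjM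
  by_cases hmem : j ∈ M
  · exact ⟨M, rfl, le_rfl, hMj, hmem⟩
  obtain _ | j := j
  · obtain ⟨i, hi⟩ := exists_mem_of_ne_zero (by rintro rfl; simp [ltil] at hjM : M ≠ 0)
    exact absurd (Nat.le_zero.mp (hMj i hi) ▸ hi) hmem
  have hMj' : ∀ i ∈ M, i ≤ j := fun i hi => Nat.le_of_lt_succ <|
    (hMj i hi).lt_of_ne fun h => hmem (h ▸ hi)
  obtain ⟨M₀, hM₀, hcard₀, hM₀j, hjM₀⟩ :=
    ih j j.lt_succ_self M hMj' ((ltil_strictMono j.lt_succ_self).le.trans hjM)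
  obtain ⟨R, rfl⟩ := exists_cons_of_mem hjM₀
  obtain ⟨p, hpj, hp⟩ := exists_ltil_succ_eq_add j
  have hRj : ∀ k ∈ R, k ≤ j := fun k hk => hM₀j k (mem_cons_of_mem hk)
  have hpR : ltil p ≤ lsum R := by
    rw [lsum_cons] at hM₀
    omega
  obtain ⟨R', hR', hcardR', hR'j, i, hiR', hpi⟩ : ∃ R', lsum R' = lsum R ∧ card R' ≤ card R ∧
      (∀ k ∈ R', k ≤ j) ∧ ∃ i ∈ R', p ≤ i := by
    by_cases hbig : ∃ i ∈ R, p ≤ i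
    · exact ⟨R, rfl, le_rfl, hRj, hbig⟩
    push Not at hbig
    obtain ⟨R', hR', hcardR', hR'p, hpR'⟩ :=
      ih p (Nat.lt_succ_of_le hpj) R (fun k hk => (hbig k hk).le) hpR
    exact ⟨R', hR', hcardR', fun k hk => (hR'p k hk).trans hpj, p, hpR', le_rfl⟩
  obtain ⟨R'', rfl⟩ := exists_cons_of_mem hiR'
  obtain ⟨M', hM', hcard', hM'j, hjM'⟩ :=
    exists_succ_mem_of_cons_cons (hR'j i (mem_cons_self _ _))
      (hp.trans_le (Nat.add_le_add_left (ltil_strictMono.monotone hpi) _))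
      (fun k hk => hR'j k (mem_cons_of_mem hk))
  refine ⟨M', ?_, ?_, hM'j, hjM'⟩
  · simp only [lsum_cons] at hM' hM₀ hR'
    omega
  · simp only [card_cons] at hcard' hcard₀ hcardR'
    omega

lemma le_card_of_lsum_eq_ltil_sub_one {a : ℕ} (ha : a ≠ 1) {M : Multiset ℕ}
    (hM : lsum M = ltil a - 1) : a / 2 ≤ card M := by
  induction a using Nat.strong_induction_on generalizing M with
  | _ a ih =>
  match a with
  | 0 => exact Nat.zero_le _
  | 1 => exact absurd rfl ha
  | 2 | 3 =>
    obtain ⟨i, hi⟩ := exists_mem_of_ne_zero (by rintro rfl; simp [ltil, lucas] at hM : M ≠ 0)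
    exact card_pos_iff_exists_mem.mpr ⟨i, hi⟩
  | a + 4 =>
    have hrec : ltil (a + 4) = ltil (a + 3) + ltil (a + 2) := ltil_add_two (by omega)
    have hpos := ltil_pos (a + 2)
    obtain ⟨M', hM', hcard, -, htop⟩ := exists_mem_of_ltil_le_lsum (a + 3) M
      (fun i hi => le_of_mem_of_lsum_lt hi (by rw [hM]; exact Nat.sub_lt (ltil_pos _) one_pos))
      (by omega)
    obtain ⟨R, rfl⟩ := exists_cons_of_mem htop
    rw [lsum_cons] at hM'
    have := ih (a + 2) (by omega) (by omega) (M := R) (by omega)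
    rw [card_cons] at hcard
    omega

lemma exists_lsum_eq_ltil_sub_one {a : ℕ} (ha : a ≠ 1) :
    ∃ M : Multiset ℕ, lsum M = ltil a - 1 ∧ card M = a / 2 := by
  induction a using Nat.strong_induction_on with
  | _ a ih =>
  match a with
  | 0 => exact ⟨0, rfl, rfl⟩
  | 1 => exact absurd rfl ha
  | 2 => exact ⟨{1}, rfl, rfl⟩
  | 3 => exact ⟨{2}, rfl, rfl⟩
  | a + 4 =>
    obtain ⟨M, hM, hcard⟩ := ih (a + 2) (by omega) (by omega)
    have hrec : ltil (a + 4) = ltil (a + 3) + ltil (a + 2) := ltil_add_two (by omega)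
    have hpos := ltil_pos (a + 2)
    refine ⟨(a + 3) ::ₘ M, ?_, ?_⟩
    · rw [lsum_cons, hM]
      omega
    · rw [card_cons, hcard]
      omega

lemma beta_eq_sInf_card (x : ℕ) :
    beta x = sInf {n | ∃ M : Multiset ℕ, lsum M = x ∧ card M = n} := by
  unfold beta
  congr 1
  ext n
  constructor
  · rintro ⟨k, b, rfl, rfl⟩
    refine ⟨(Finset.range (k + 1)).val.bind fun i => replicate (b i) i, ?_, ?_⟩
    · simp [lsum, map_bind, sum_bind, Finset.sum, map_replicate]
    · simp [card_bind, Finset.sum]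
  · rintro ⟨M, rfl, rfl⟩
    have hsub : ∀ i ∈ M, i ∈ Finset.range (M.sup + 1) :=
      fun i hi => Finset.mem_range_succ_iff.mpr (le_sup hi)
    refine ⟨M.sup, fun i => count i M, ?_, (Multiset.sum_count_eq_card hsub).symm⟩
    rw [lsum, Finset.sum_multiset_map_count]
    refine Finset.sum_subset (fun i hi => hsub i (mem_toFinset.mp hi)) fun i _ hi => ?_
    simp [count_eq_zero.mpr (mt mem_toFinset.mpr hi)]

theorem beta_ltil_sub_one (a : ℕ) (ha : a ≠ 1) :
    beta (ltil a - 1) = (a - 1 + 1) / 2 := by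
  rw [show (a - 1 + 1) / 2 = a / 2 by omega, beta_eq_sInf_card]
  obtain ⟨M, hM, hcard⟩ := exists_lsum_eq_ltil_sub_one ha
  refine IsLeast.csInf_eq ⟨⟨M, hM, hcard⟩, ?_⟩
  rintro n ⟨M', hM', rfl⟩
  exact le_card_of_lsum_eq_ltil_sub_one ha hM'
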